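/- arXiv:2405.04816 — 2 statements merged into one kernel-verified Lean document; each statement's English description precedes it below -/
import Mathlib

section
/- Let μ be a probability measure on [0,1] with ∫ q dμ(q) = α, and let m ≥ 2. If ∫ (1−q)^m dμ(q) = ∫ (1−q) dμ(q), then μ is supported on {0,1}; that is, μ({0}) = 1−α and μ({1}) = α. -/
open MeasureTheory

/-- Equality in the repetition bound forces the de Finetti mixing measure to be supported
on the endpoints {0,1}, with μ({0}) = 1-α and μ({1}) = α. -/
theorem stmt_3 (μ : Measure ℝ) [IsProbabilityMeasure μ]
    (hsupp : ∀ᵐ q ∂μ, q ∈ Set.Icc (0 : ℝ) 1)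
    (α : ℝ) (hmean : ∫ q, q ∂μ = α)
    (m : ℕ) (hm : 2 ≤ m)
    (heq : ∫ q, (1 - q) ^ m ∂μ = ∫ q, (1 - q) ∂μ) :
    μ {(0 : ℝ)} = ENNReal.ofReal (1 - α) ∧ μ {(1 : ℝ)} = ENNReal.ofReal α := by
  -- integrability
  have hmeas1 : AEStronglyMeasurable (fun q : ℝ => (1 - q) ^ m) μ :=
    (Continuous.aestronglyMeasurable (by continuity))
  have hmeas2 : AEStronglyMeasurable (fun q : ℝ => (1 - q)) μ :=
    (Continuous.aestronglyMeasurable (by continuity))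
  have hint1 : Integrable (fun q : ℝ => (1 - q) ^ m) μ := by
    refine Integrable.mono' (integrable_const (1 : ℝ)) hmeas1 ?_
    filter_upwards [hsupp] with q hq
    rw [Real.norm_eq_abs, abs_pow, abs_of_nonneg (by linarith [hq.2])]
    exact pow_le_one₀ (by linarith [hq.2]) (by linarith [hq.1])
  have hint2 : Integrable (fun q : ℝ => (1 - q)) μ := by
    refine Integrable.mono' (integrable_const (1 : ℝ)) hmeas2 ?_
    filter_upwards [hsupp] with q hq
    rw [Real.norm_eq_abs, abs_of_nonneg (by linarith [hq.2])]
    linarith [hq.1]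
  set f : ℝ → ℝ := fun q => (1 - q) - (1 - q) ^ m with hf
  have hfint : Integrable f μ := hint2.sub hint1
  have hfnn : 0 ≤ᵐ[μ] f := by
    filter_upwards [hsupp] with q hq
    have : (1 - q) ^ m ≤ 1 - q :=
      pow_le_of_le_one (by linarith [hq.2]) (by linarith [hq.1]) (by omega)
    simpa [hf] using sub_nonneg.mpr this
  have hfzero : ∫ q, f q ∂μ = 0 := by
    simp [hf, integral_sub hint2 hint1, heq]
  have hae0 : f =ᵐ[μ] 0 := (integral_eq_zero_iff_of_nonneg_ae hfnn hfint).mp hfzero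
  -- a.e. q = 0 or q = 1
  have hae01 : ∀ᵐ q ∂μ, q = 0 ∨ q = 1 := by
    filter_upwards [hsupp, hae0] with q hq hfq
    have heqq : (1 - q) ^ m = 1 - q := by
      have := hfq
      simp [hf] at this
      linarith [this]
    set t := 1 - q with ht
    have ht0 : 0 ≤ t := by simp [ht]; linarith [hq.2]
    have ht1 : t ≤ 1 := by simp [ht]; linarith [hq.1]
    rcases eq_or_lt_of_le ht0 with h0 | h0
    · right; simp [ht] at h0; linarith
    rcases eq_or_lt_of_le ht1 with h1 | h1
    · left; simp [ht] at h1; linarith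
    · exfalso
      have hlt : t ^ m < t := by
        calc t ^ m = t * t ^ (m - 1) := by
              rw [← pow_succ']
              congr 1
              omega
        _ < t * 1 := by
              apply mul_lt_mul_of_pos_left _ h0
              exact pow_lt_one₀ ht0 h1 (by omega)
        _ = t := mul_one t
      linarith [heqq]
  have hmeas01 : MeasurableSet ({0, 1} : Set ℝ) := by measurability
  have hμ01 : μ ({0, 1} : Set ℝ) = 1 := by
    have : μ ({0, 1} : Set ℝ)ᶜ = 0 := by
      apply ae_iff.mp
      filter_upwards [hae01] with q hq
      simpa using hq
    have h2 := measure_add_measure_compl (μ := μ) hmeas01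
    rw [this, add_zero, measure_univ] at h2
    exact h2
  -- mean computation
  have hind : (fun q : ℝ => q) =ᵐ[μ] Set.indicator {(1:ℝ)} (fun _ => (1:ℝ)) := by
    filter_upwards [hae01] with q hq
    rcases hq with h | h <;> simp [h]
  have hα : (μ {(1:ℝ)}).toReal = α := by
    rw [← hmean, integral_congr_ae hind,
      integral_indicator_const (1 : ℝ) (measurableSet_singleton 1)]
    simp
    rfl
  have hfin1 : μ {(1:ℝ)} ≠ ⊤ := measure_ne_top μ _
  have hμ1 : μ {(1:ℝ)} = ENNReal.ofReal α := by
    rw [← hα, ENNReal.ofReal_toReal hfin1]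
  have hsum : μ {(0:ℝ)} + μ {(1:ℝ)} = 1 := by
    rw [← hμ01]
    rw [show ({0, 1} : Set ℝ) = {0} ∪ {1} by rfl]
    rw [measure_union (by simp) (measurableSet_singleton 1)]
  have hα1 : α ≤ 1 := by
    rw [← hα]
    exact ENNReal.toReal_le_of_le_ofReal zero_le_one (by simp [prob_le_one])
  have hα0 : 0 ≤ α := by rw [← hα]; exact ENNReal.toReal_nonneg
  have hμ0 : μ {(0:ℝ)} = 1 - ENNReal.ofReal α := by
    rw [← hμ1]
    exact ENNReal.eq_sub_of_add_eq hfin1 hsum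
  refine ⟨?_, hμ1⟩
  rw [hμ0, ENNReal.ofReal_sub _ hα0]
  simp
end

section
/- Let α ∈ (0,1), m ≥ 1 an integer, and let μ be a probability measure on [0,1] with ∫ q dμ(q) = α/2. For each K, let f_K(q) = P( (1/K)·Σ_{k=1}^K Z_k^q < 1/2 ) where Z_k^q are i.i.d. Bernoulli(q). Then limsup_{K→∞} ( 1 − ∫ f_K(q)^m dμ(q) ) ≤ μ({q ≥ 1/2}) ≤ α. -/
open MeasureTheory Filter

/-- The probability that Binomial(K,q) is strictly below K/2, i.e.
f_K(q) = P((1/K)·Σ Z_k < 1/2) for Z_k i.i.d. Bernoulli(q). -/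
noncomputable def fK (K : ℕ) (q : ℝ) : ℝ :=
  ∑ j ∈ Finset.range (K + 1),
    if 2 * (j : ℝ) < (K : ℝ) then (K.choose j : ℝ) * q ^ j * (1 - q) ^ (K - j) else 0

open Finset in
lemma sum_p (K : ℕ) (q : ℝ) :
    ∑ j ∈ Finset.range (K+1), (K.choose j : ℝ) * q ^ j * (1-q) ^ (K-j) = 1 := by
  have h := add_pow q (1-q) K
  simp only [add_sub_cancel, one_pow] at h
  calc ∑ j ∈ Finset.range (K+1), (K.choose j : ℝ) * q ^ j * (1-q) ^ (K-j)
      = ∑ j ∈ Finset.range (K+1), q ^ j * (1-q) ^ (K-j) * (K.choose j : ℝ) :=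
        Finset.sum_congr rfl fun j _ => by ring
    _ = 1 := h.symm

lemma sum_jp (K : ℕ) (q : ℝ) :
    ∑ j ∈ Finset.range (K+1), (j:ℝ) * ((K.choose j : ℝ) * q ^ j * (1-q) ^ (K-j)) = K * q := by
  cases K with
  | zero => simp
  | succ n =>
    rw [Finset.sum_range_succ']
    have key : ∀ i ∈ Finset.range (n+1),
        ((i+1 : ℕ):ℝ) * (((n+1).choose (i+1) : ℝ) * q ^ (i+1) * (1-q) ^ (n+1-(i+1)))
        = ((n:ℝ)+1) * q * ((n.choose i : ℝ) * q ^ i * (1-q) ^ (n-i)) := by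
      intro i hi
      have h' : ((n:ℝ)+1) * (n.choose i : ℝ) = ((n+1).choose (i+1) : ℝ) * ((i:ℝ)+1) := by
        exact_mod_cast Nat.add_one_mul_choose_eq n i
      have hsub : n + 1 - (i+1) = n - i := by omega
      rw [hsub, pow_succ]
      push_cast
      linear_combination (-(q ^ i * q * (1-q) ^ (n-i))) * h'
    rw [Finset.sum_congr rfl key, ← Finset.mul_sum, sum_p n q]
    push_cast
    ring

lemma sum_j2p (K : ℕ) (q : ℝ) :
    ∑ j ∈ Finset.range (K+1), (j:ℝ) * ((j:ℝ)-1) * ((K.choose j : ℝ) * q ^ j * (1-q) ^ (K-j))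
      = K * ((K:ℝ)-1) * q^2 := by
  cases K with
  | zero => simp
  | succ n =>
    rw [Finset.sum_range_succ']
    have key : ∀ i ∈ Finset.range (n+1),
        ((i+1 : ℕ):ℝ) * (((i+1:ℕ):ℝ)-1) * (((n+1).choose (i+1) : ℝ) * q ^ (i+1) * (1-q) ^ (n+1-(i+1)))
        = ((n:ℝ)+1) * q * ((i:ℝ) * ((n.choose i : ℝ) * q ^ i * (1-q) ^ (n-i))) := by
      intro i hi
      have h' : ((n:ℝ)+1) * (n.choose i : ℝ) = ((n+1).choose (i+1) : ℝ) * ((i:ℝ)+1) := by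
        exact_mod_cast Nat.add_one_mul_choose_eq n i
      have hsub : n + 1 - (i+1) = n - i := by omega
      rw [hsub, pow_succ]
      push_cast
      linear_combination (-((i:ℝ) * q ^ i * q * (1-q) ^ (n-i))) * h'
    rw [Finset.sum_congr rfl key, ← Finset.mul_sum, sum_jp n q]
    push_cast
    ring

lemma sum_var (K : ℕ) (q : ℝ) :
    ∑ j ∈ Finset.range (K+1), ((j:ℝ) - K*q)^2 * ((K.choose j : ℝ) * q ^ j * (1-q) ^ (K-j))
      = K * q * (1-q) := by
  have h0 := sum_p K q
  have h1 := sum_jp K q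
  have h2 := sum_j2p K q
  have expand : ∀ j ∈ Finset.range (K+1),
      ((j:ℝ) - K*q)^2 * ((K.choose j : ℝ) * q ^ j * (1-q) ^ (K-j))
      = (j:ℝ) * ((j:ℝ)-1) * ((K.choose j : ℝ) * q ^ j * (1-q) ^ (K-j))
        + (1 - 2*K*q) * ((j:ℝ) * ((K.choose j : ℝ) * q ^ j * (1-q) ^ (K-j)))
        + (K*q)^2 * ((K.choose j : ℝ) * q ^ j * (1-q) ^ (K-j)) := by
    intro j _; ring
  rw [Finset.sum_congr rfl expand]
  rw [Finset.sum_add_distrib, Finset.sum_add_distrib, ← Finset.mul_sum, ← Finset.mul_sum,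
    h0, h1, h2]
  ring


lemma p_nonneg (K j : ℕ) {q : ℝ} (hq0 : 0 ≤ q) (hq1 : q ≤ 1) :
    0 ≤ (K.choose j : ℝ) * q ^ j * (1-q) ^ (K-j) := by
  have h1 := pow_nonneg hq0 j
  have h2 := pow_nonneg (by linarith : (0:ℝ) ≤ 1 - q) (K - j)
  positivity

lemma fK_nonneg (K : ℕ) {q : ℝ} (hq0 : 0 ≤ q) (hq1 : q ≤ 1) : 0 ≤ fK K q := by
  apply Finset.sum_nonneg
  intro j _
  split
  · exact p_nonneg K j hq0 hq1
  · exact le_refl _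

lemma fK_le_one (K : ℕ) {q : ℝ} (hq0 : 0 ≤ q) (hq1 : q ≤ 1) : fK K q ≤ 1 := by
  have h := sum_p K q
  calc fK K q ≤ ∑ j ∈ Finset.range (K+1), (K.choose j : ℝ) * q ^ j * (1-q) ^ (K-j) := by
        apply Finset.sum_le_sum
        intro j _
        split
        · exact le_refl _
        · exact p_nonneg K j hq0 hq1
    _ = 1 := h

lemma one_sub_fK (K : ℕ) (q : ℝ) :
    1 - fK K q = ∑ j ∈ Finset.range (K+1),
      if ¬ (2 * (j : ℝ) < (K : ℝ)) then (K.choose j : ℝ) * q ^ j * (1-q) ^ (K-j) else 0 := by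
  have h2 : ∑ j ∈ Finset.range (K+1),
      ((if 2 * (j : ℝ) < (K : ℝ) then (K.choose j : ℝ) * q ^ j * (1-q) ^ (K-j) else 0)
        + (if ¬ (2 * (j : ℝ) < (K : ℝ)) then (K.choose j : ℝ) * q ^ j * (1-q) ^ (K-j) else 0))
      = ∑ j ∈ Finset.range (K+1), (K.choose j : ℝ) * q ^ j * (1-q) ^ (K-j) := by
    refine Finset.sum_congr rfl fun j _ => ?_
    split <;> simp
  have h3 : fK K q + ∑ j ∈ Finset.range (K+1),
      (if ¬ (2 * (j : ℝ) < (K : ℝ)) then (K.choose j : ℝ) * q ^ j * (1-q) ^ (K-j) else 0) = 1 := by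
    rw [fK, ← Finset.sum_add_distrib, h2, sum_p]
  linarith

lemma tail_le (K : ℕ) (hK : 1 ≤ K) {q : ℝ} (hq0 : 0 ≤ q) (hq1 : q ≤ 1) (hq : q < 1/2) :
    1 - fK K q ≤ q * (1-q) / (K * (1/2 - q)^2) := by
  rw [one_sub_fK]
  have hKpos : (0:ℝ) < (K:ℝ) := by exact_mod_cast hK
  have hdq : (0:ℝ) < 1/2 - q := by linarith
  set c : ℝ := 1 / ((K:ℝ)^2 * (1/2 - q)^2) with hc
  have hcpos : 0 < c := by positivity
  have step : ∀ j ∈ Finset.range (K+1),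
      (if ¬ (2 * (j : ℝ) < (K : ℝ)) then (K.choose j : ℝ) * q ^ j * (1-q) ^ (K-j) else 0)
      ≤ c * (((j:ℝ) - K*q)^2 * ((K.choose j : ℝ) * q ^ j * (1-q) ^ (K-j))) := by
    intro j _
    have hp := p_nonneg K j hq0 hq1
    split
    · rename_i h
      have hjK : (K:ℝ) ≤ 2*j := not_lt.mp h
      have ha : (0:ℝ) < (K:ℝ) * (1/2 - q) := by positivity
      have hab : (K:ℝ) * (1/2 - q) ≤ (j:ℝ) - K*q := by nlinarith
      have hsq : ((K:ℝ) * (1/2 - q))^2 ≤ ((j:ℝ) - K*q)^2 := by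
        apply pow_le_pow_left₀ (le_of_lt ha) hab
      have hone : 1 ≤ c * ((j:ℝ) - K*q)^2 := by
        have he : c * (((K:ℝ)) * (1/2 - q))^2 = 1 := by
          have h2 : ((K:ℝ)*(1/2-q))^2 = (K:ℝ)^2*(1/2-q)^2 := by ring
          rw [hc, h2, one_div, inv_mul_cancel₀ (by positivity)]
        nlinarith
      calc (K.choose j : ℝ) * q ^ j * (1-q) ^ (K-j)
          = 1 * ((K.choose j : ℝ) * q ^ j * (1-q) ^ (K-j)) := by ring
        _ ≤ (c * ((j:ℝ) - K*q)^2) * ((K.choose j : ℝ) * q ^ j * (1-q) ^ (K-j)) := by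
            apply mul_le_mul_of_nonneg_right hone hp
        _ = c * (((j:ℝ) - K*q)^2 * ((K.choose j : ℝ) * q ^ j * (1-q) ^ (K-j))) := by ring
    · positivity
  calc ∑ j ∈ Finset.range (K+1),
        (if ¬ (2 * (j : ℝ) < (K : ℝ)) then (K.choose j : ℝ) * q ^ j * (1-q) ^ (K-j) else 0)
      ≤ ∑ j ∈ Finset.range (K+1),
        c * (((j:ℝ) - K*q)^2 * ((K.choose j : ℝ) * q ^ j * (1-q) ^ (K-j))) :=
        Finset.sum_le_sum step
    _ = c * ((K:ℝ) * q * (1-q)) := by rw [← Finset.mul_sum, sum_var]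
    _ = q * (1-q) / (K * (1/2 - q)^2) := by
        have hK0 : (K:ℝ) ≠ 0 := ne_of_gt hKpos
        have hd0 : (1/2 - q) ≠ 0 := ne_of_gt hdq
        rw [hc, one_div, inv_mul_eq_div, div_eq_div_iff (by positivity) (by positivity)]
        ring


lemma fK_continuous (K : ℕ) : Continuous (fK K) := by
  apply continuous_finset_sum
  intro j _
  by_cases h : 2 * (j : ℝ) < (K : ℝ)
  · simp only [if_pos h]; fun_prop
  · simp only [if_neg h]; exact continuous_const

lemma fK_tendsto {q : ℝ} (hq0 : 0 ≤ q) (hq1 : q ≤ 1) (hq : q < 1/2) :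
    Tendsto (fun K : ℕ => fK K q) atTop (nhds 1) := by
  have hd0 : (0:ℝ) < 1/2 - q := by linarith
  have hd : (0:ℝ) < (1/2 - q)^2 := by positivity
  have hlow : Tendsto (fun K : ℕ => 1 - (q * (1-q) / (1/2 - q)^2) / (K:ℝ)) atTop (nhds 1) := by
    have := (tendsto_const_div_atTop_nhds_zero_nat (q * (1-q) / (1/2 - q)^2))
    have h2 := Tendsto.const_sub (1:ℝ) this
    simpa using h2
  apply tendsto_of_tendsto_of_tendsto_of_le_of_le' hlow tendsto_const_nhds
  · filter_upwards [eventually_ge_atTop 1] with K hK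
    have := tail_le K hK hq0 hq1 hq
    have hrw : q * (1-q) / ((K:ℝ) * (1/2 - q)^2) = (q * (1-q) / (1/2 - q)^2) / (K:ℝ) := by
      rw [div_div]; ring_nf
    linarith [hrw ▸ this]
  · filter_upwards with K
    exact fK_le_one K hq0 hq1

/-- Limiting manipulation bound for the median-aggregated test: the probability that any of
m repetitions rejects is asymptotically at most μ({q ≥ 1/2}) ≤ α. -/
theorem stmt_19 (α : ℝ) (hα0 : 0 < α) (hα1 : α < 1) (m : ℕ) (hm : 1 ≤ m)
    (μ : Measure ℝ) [IsProbabilityMeasure μ]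
    (hsupp : ∀ᵐ q ∂μ, q ∈ Set.Icc (0 : ℝ) 1)
    (hmean : ∫ q, q ∂μ = α / 2) :
    limsup (fun K : ℕ => 1 - ∫ q, (fK K q) ^ m ∂μ) atTop ≤
        (μ {q | (1 / 2 : ℝ) ≤ q}).toReal ∧
      (μ {q | (1 / 2 : ℝ) ≤ q}).toReal ≤ α := by
  set c : ℝ := (μ {q | (1 / 2 : ℝ) ≤ q}).toReal with hc
  -- Markov part
  have hmarkov : c ≤ α := by
    have hnn : 0 ≤ᵐ[μ] (fun q : ℝ => q) := by
      filter_upwards [hsupp] with q hq; exact hq.1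
    have hint : Integrable (fun q : ℝ => q) μ := by
      apply Integrable.mono' (integrable_const (1:ℝ)) measurable_id.aestronglyMeasurable
      filter_upwards [hsupp] with q hq
      rw [Real.norm_eq_abs, abs_le]
      simp only [id_eq]
      exact ⟨by linarith [hq.1], hq.2⟩
    have h := mul_meas_ge_le_integral_of_nonneg hnn hint (1/2)
    rw [hmean] at h
    change 1/2 * (μ {x | (1/2:ℝ) ≤ x}).toReal ≤ α/2 at h
    simp only [hc]
    linarith [h]
  refine ⟨?_, hmarkov⟩
  -- integrability
  have hmeasS : MeasurableSet {q : ℝ | (1/2:ℝ) ≤ q} := measurableSet_le measurable_const measurable_id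
  have hmeasS' : MeasurableSet {q : ℝ | q < (1/2:ℝ)} := measurableSet_lt measurable_id measurable_const
  have hint_f : ∀ K : ℕ, Integrable (fun q => fK K q ^ m) μ := by
    intro K
    apply Integrable.mono' (integrable_const (1:ℝ))
      (((fK_continuous K).pow m).aestronglyMeasurable)
    filter_upwards [hsupp] with q hq
    rw [Real.norm_eq_abs, abs_le]
    constructor
    · have := pow_nonneg (fK_nonneg K hq.1 hq.2) m; simp only [Pi.pow_apply]; linarith
    · exact pow_le_one₀ (fK_nonneg K hq.1 hq.2) (fK_le_one K hq.1 hq.2)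
  set hB : ℕ → ℝ → ℝ := fun K => Set.indicator {q : ℝ | q < (1/2:ℝ)} (fun q => 1 - fK K q ^ m)
    with hBdef
  have hint_B : ∀ K, Integrable (hB K) μ := fun K =>
    (Integrable.sub (integrable_const 1) (hint_f K)).indicator hmeasS'
  have hint_ind : Integrable (Set.indicator {q : ℝ | (1/2:ℝ) ≤ q} (fun _ => (1:ℝ))) μ :=
    (integrable_const (1:ℝ)).indicator hmeasS
  -- key bound for each K
  have hKey : ∀ K : ℕ, 1 - ∫ q, (fK K q) ^ m ∂μ ≤ c + ∫ q, hB K q ∂μ := by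
    intro K
    have h1 : 1 - ∫ q, (fK K q) ^ m ∂μ = ∫ q, (1 - fK K q ^ m) ∂μ := by
      rw [integral_sub (integrable_const 1) (hint_f K)]
      simp
    rw [h1]
    have h2 : ∫ q, (1 - fK K q ^ m) ∂μ ≤
        ∫ q, (Set.indicator {q : ℝ | (1/2:ℝ) ≤ q} (fun _ => (1:ℝ)) q + hB K q) ∂μ := by
      apply integral_mono_ae ((integrable_const 1).sub (hint_f K)) (hint_ind.add (hint_B K))
      filter_upwards [hsupp] with q hq
      simp only [Pi.sub_apply, Pi.add_apply]
      by_cases hq2 : q < 1/2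
      · have e1 : Set.indicator {q : ℝ | (1/2:ℝ) ≤ q} (fun _ => (1:ℝ)) q = 0 :=
          Set.indicator_of_notMem (by simpa using hq2) _
        have e2 : hB K q = 1 - fK K q ^ m := Set.indicator_of_mem (by simpa using hq2) _
        rw [e1, e2]; linarith
      · have e1 : Set.indicator {q : ℝ | (1/2:ℝ) ≤ q} (fun _ => (1:ℝ)) q = 1 :=
          Set.indicator_of_mem (by simpa using not_lt.mp hq2) _
        have e2 : hB K q = 0 := Set.indicator_of_notMem (by simpa using not_lt.mp hq2) _
        rw [e1, e2]
        have := pow_nonneg (fK_nonneg K hq.1 hq.2) m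
        linarith
    rw [integral_add hint_ind (hint_B K), integral_indicator_const (1:ℝ) hmeasS] at h2
    simpa [hc, Measure.real] using h2
  -- dominated convergence : ∫ hB K → 0
  have hDCT : Tendsto (fun K => ∫ q, hB K q ∂μ) atTop (nhds 0) := by
    have h0 : (0:ℝ) = ∫ _q, (0:ℝ) ∂μ := by simp
    rw [h0]
    apply tendsto_integral_of_dominated_convergence (fun _ => (1:ℝ))
    · intro K
      exact ((continuous_const.sub ((fK_continuous K).pow m)).aestronglyMeasurable).indicator hmeasS'
    · exact integrable_const 1
    · intro K
      filter_upwards [hsupp] with q hq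
      by_cases hq2 : q < 1/2
      · have e2 : hB K q = 1 - fK K q ^ m := Set.indicator_of_mem (by simpa using hq2) _
        rw [e2, Real.norm_eq_abs, abs_le]
        have h1 := pow_nonneg (fK_nonneg K hq.1 hq.2) m
        have h2 := pow_le_one₀ (n := m) (fK_nonneg K hq.1 hq.2) (fK_le_one K hq.1 hq.2)
        constructor <;> linarith
      · have e2 : hB K q = 0 := Set.indicator_of_notMem (by simpa using not_lt.mp hq2) _
        rw [e2]; simp
    · filter_upwards [hsupp] with q hq
      by_cases hq2 : q < 1/2
      · have e2 : ∀ K, hB K q = 1 - fK K q ^ m := fun K =>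
          Set.indicator_of_mem (by simpa using hq2) _
        simp only [e2]
        have := ((fK_tendsto hq.1 hq.2 hq2).pow m)
        have h3 : Tendsto (fun K : ℕ => 1 - fK K q ^ m) atTop (nhds (1 - 1 ^ m)) :=
          Tendsto.const_sub 1 this
        simpa using h3
      · have e2 : ∀ K, hB K q = 0 := fun K =>
          Set.indicator_of_notMem (by simpa using not_lt.mp hq2) _
        simp only [e2]
        exact tendsto_const_nhds
  -- conclude limsup
  have htend : Tendsto (fun K => c + ∫ q, hB K q ∂μ) atTop (nhds c) := by
    have := hDCT.const_add c
    simpa using this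
  calc limsup (fun K : ℕ => 1 - ∫ q, (fK K q) ^ m ∂μ) atTop
      ≤ limsup (fun K => c + ∫ q, hB K q ∂μ) atTop := by
        refine limsup_le_limsup (Eventually.of_forall hKey) ?_ ?_
        · apply IsBoundedUnder.isCoboundedUnder_le
          apply isBoundedUnder_of
          refine ⟨0, fun K => ?_⟩
          have h1 : ∫ q, (fK K q) ^ m ∂μ ≤ 1 := by
            calc ∫ q, (fK K q) ^ m ∂μ ≤ ∫ _q, (1:ℝ) ∂μ := by
                  apply integral_mono_ae (hint_f K) (integrable_const 1)
                  filter_upwards [hsupp] with q hq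
                  exact pow_le_one₀ (fK_nonneg K hq.1 hq.2) (fK_le_one K hq.1 hq.2)
              _ = 1 := by simp
          linarith
        · exact htend.isBoundedUnder_le
    _ = c := htend.limsup_eq
end
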